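/- Let μ₀, μ₁, …, μ_N be probability measures on ℝ^d with finite first moments, f a labeling function and h a hypothesis such that x ↦ |h(x) − f(x)| is L-Lipschitz. Then ε_{μ_N}(h) ≤ ε_{μ₀}(h) + L · Σ_{k=0}^{N−1} W₁(μ_k, μ_{k+1}). -/

import Mathlib

/-!
Along any coupling `γ` of `μ` and `ν`, an `L`-Lipschitz `g` satisfies
`∫ g dν - ∫ g dμ = ∫ (g y - g x) dγ ≤ L ∫ ‖x - y‖ dγ`; taking the infimum over couplings gives
`∫ g dν ≤ ∫ g dμ + L · W₁(μ, ν)`, and summing these one-step bounds along the chain telescopes.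
-/

open MeasureTheory

/-- The 1-Wasserstein distance: infimum over couplings of the expected distance. -/
noncomputable def W1 {d : ℕ} (μ ν : Measure (EuclideanSpace ℝ (Fin d))) : ℝ :=
  sInf { r : ℝ | ∃ γ : Measure (EuclideanSpace ℝ (Fin d) × EuclideanSpace ℝ (Fin d)),
    γ.map Prod.fst = μ ∧ γ.map Prod.snd = ν ∧ r = ∫ p, ‖p.1 - p.2‖ ∂γ }

open scoped NNReal

/-- For `L < 0` a single element of `S` already suffices, since then `r ↦ L * r` is antitone. -/
theorem le_mul_csInf {S : Set ℝ} {a L : ℝ} (hne : S.Nonempty) (hbdd : BddBelow S)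
    (h : ∀ r ∈ S, a ≤ L * r) : a ≤ L * sInf S := by
  rcases le_or_gt 0 L with hL | hL
  · rw [← smul_eq_mul, ← Real.sInf_smul_of_nonneg hL]
    exact le_csInf hne.smul_set fun _ ⟨r, hr, hLr⟩ => hLr ▸ h r hr
  · obtain ⟨r, hr⟩ := hne
    exact (h r hr).trans (mul_le_mul_of_nonpos_left (csInf_le hbdd hr) hL.le)

section Coupling

variable {E : Type*} [NormedAddCommGroup E] [MeasurableSpace E] [BorelSpace E]

theorem LipschitzWith.integrable_of_integrable_norm {K : ℝ≥0} {g : E → ℝ}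
    (hg : LipschitzWith K g) {μ : Measure E} [IsFiniteMeasure μ]
    (hμ : Integrable (fun x => ‖x‖) μ) : Integrable g μ := by
  refine Integrable.mono' ((integrable_const ‖g 0‖).add (hμ.const_mul K))
    hg.continuous.aestronglyMeasurable (ae_of_all _ fun x => ?_)
  have hx : ‖g x - g 0‖ ≤ K * ‖x‖ := by simpa [dist_eq_norm] using hg.dist_le_mul x 0
  calc ‖g x‖ ≤ ‖g 0‖ + ‖g x - g 0‖ := norm_le_norm_add_norm_sub' _ _
    _ ≤ ‖g 0‖ + K * ‖x‖ := by gcongr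

theorem integral_sub_integral_le_mul_integral_norm_sub [SecondCountableTopology E]
    {μ ν : Measure E} [IsFiniteMeasure μ] {γ : Measure (E × E)}
    (hfst : γ.map Prod.fst = μ) (hsnd : γ.map Prod.snd = ν)
    (hμ : Integrable (fun x => ‖x‖) μ) (hν : Integrable (fun x => ‖x‖) ν)
    {g : E → ℝ} {L : ℝ} (hg : ∀ x y, |g x - g y| ≤ L * ‖x - y‖) :
    ∫ x, g x ∂ν - ∫ x, g x ∂μ ≤ L * ∫ p, ‖p.1 - p.2‖ ∂γ := by
  have : IsFiniteMeasure (γ.map Prod.fst) := hfst ▸ inferInstance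
  have : IsFiniteMeasure γ := Measure.isFiniteMeasure_of_map measurable_fst.aemeasurable
  have : IsFiniteMeasure ν := hsnd ▸ Measure.isFiniteMeasure_map γ Prod.snd
  have hLip : LipschitzWith L.toNNReal g :=
    .of_dist_le' fun x y => by simpa [Real.dist_eq, dist_eq_norm] using hg x y
  have hg₁ : Integrable (fun p : E × E => g p.1) γ :=
    (hfst ▸ hLip.integrable_of_integrable_norm hμ).comp_measurable measurable_fst
  have hg₂ : Integrable (fun p : E × E => g p.2) γ :=
    (hsnd ▸ hLip.integrable_of_integrable_norm hν).comp_measurable measurable_snd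
  have hdist : Integrable (fun p : E × E => ‖p.1 - p.2‖) γ := by
    refine Integrable.mono' (((hfst ▸ hμ).comp_measurable measurable_fst).add
      ((hsnd ▸ hν).comp_measurable measurable_snd))
      (continuous_fst.sub continuous_snd).norm.aestronglyMeasurable (ae_of_all _ fun p => ?_)
    simpa using norm_sub_le p.1 p.2
  rw [← hfst, ← hsnd,
    integral_map measurable_snd.aemeasurable hLip.continuous.aestronglyMeasurable,
    integral_map measurable_fst.aemeasurable hLip.continuous.aestronglyMeasurable,
    ← integral_sub hg₂ hg₁, ← integral_const_mul]
  refine integral_mono (hg₂.sub hg₁) (hdist.const_mul L) fun p => ?_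
  calc g p.2 - g p.1 ≤ |g p.2 - g p.1| := le_abs_self _
    _ ≤ L * ‖p.2 - p.1‖ := hg _ _
    _ = L * ‖p.1 - p.2‖ := by rw [norm_sub_rev]

end Coupling

theorem integral_le_integral_add_mul_W1 {d : ℕ} {μ ν : Measure (EuclideanSpace ℝ (Fin d))}
    [IsProbabilityMeasure μ] [IsProbabilityMeasure ν]
    (hμ : Integrable (fun x => ‖x‖) μ) (hν : Integrable (fun x => ‖x‖) ν)
    {g : EuclideanSpace ℝ (Fin d) → ℝ} {L : ℝ} (hg : ∀ x y, |g x - g y| ≤ L * ‖x - y‖) :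
    ∫ x, g x ∂ν ≤ ∫ x, g x ∂μ + L * W1 μ ν := by
  suffices ∫ x, g x ∂ν - ∫ x, g x ∂μ ≤ L * W1 μ ν by linarith
  refine le_mul_csInf ⟨_, μ.prod ν, by simp, by simp, rfl⟩ ⟨0, ?_⟩ ?_
  · rintro _ ⟨_, _, _, rfl⟩
    exact integral_nonneg fun _ => norm_nonneg _
  · rintro _ ⟨γ, hfst, hsnd, rfl⟩
    exact integral_sub_integral_le_mul_integral_norm_sub hfst hsnd hμ hν hg

theorem chain_generalization_bound_W1 {d : ℕ} (L : ℝ) (N : ℕ)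
    (μ : ℕ → Measure (EuclideanSpace ℝ (Fin d)))
    (hprob : ∀ k ≤ N, IsProbabilityMeasure (μ k))
    (hmom : ∀ k ≤ N, Integrable (fun x => ‖x‖) (μ k))
    (f h : EuclideanSpace ℝ (Fin d) → ℝ)
    (hLip : ∀ x y, |(|h x - f x| - |h y - f y|)| ≤ L * ‖x - y‖) :
    (∫ x, |h x - f x| ∂(μ N)) ≤ (∫ x, |h x - f x| ∂(μ 0))
      + L * ∑ k ∈ Finset.range N, W1 (μ k) (μ (k + 1)) := by
  set ε : ℕ → ℝ := fun k => ∫ x, |h x - f x| ∂(μ k)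
  have step : ∀ k ∈ Finset.range N, ε (k + 1) - ε k ≤ L * W1 (μ k) (μ (k + 1)) := by
    intro k hk
    have hk : k < N := Finset.mem_range.mp hk
    have := hprob k hk.le
    have := hprob (k + 1) hk
    have := integral_le_integral_add_mul_W1 (hmom k hk.le) (hmom (k + 1) hk) hLip
    linarith
  have telescope := calc
    ε N - ε 0 = ∑ k ∈ Finset.range N, (ε (k + 1) - ε k) := (Finset.sum_range_sub ε N).symm
    _ ≤ ∑ k ∈ Finset.range N, L * W1 (μ k) (μ (k + 1)) := Finset.sum_le_sum step
    _ = L * ∑ k ∈ Finset.range N, W1 (μ k) (μ (k + 1)) := (Finset.mul_sum _ _ _).symm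
  linarith
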